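/- Suppose the real sequence (α_n)_{n≥0} satisfies the structure relation with (a_k), i.e. for every n ≥ 0: [n]_q a_n = Σ_{k=0}^{n} [n choose k]_q q^{n-k} α_k a_{n-k}. Then for every integer n ≥ 1 the q-Appell polynomials satisfy the linear homogeneous recurrence [n]_q A_{n,q}(qx) = Σ_{k=0}^{n} [n choose k]_q α_{n-k} q^k A_{k,q}(x) + x [n]_q q^n A_{n-1,q}(x), as an identity of real polynomials in x. -/

import Mathlib

open Polynomial Finset

/-- The q-integer [n]_q = 1 + q + ... + q^(n-1). -/
noncomputable def qInt (q : ℝ) (n : ℕ) : ℝ := ∑ i ∈ Finset.range n, q ^ i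

/-- The q-factorial [n]_q! = [1]_q [2]_q ... [n]_q, with [0]_q! = 1. -/
noncomputable def qFact (q : ℝ) : ℕ → ℝ
  | 0 => 1
  | n + 1 => qFact q n * qInt q (n + 1)

/-- The q-binomial coefficient [n choose k]_q = [n]_q! / ([k]_q! [n-k]_q!). -/
noncomputable def qBinom (q : ℝ) (n k : ℕ) : ℝ := qFact q n / (qFact q k * qFact q (n - k))

/-- The q-derivative on real polynomials, determined by D_q(x^n) = [n]_q x^(n-1). -/
noncomputable def qDeriv (q : ℝ) (p : Polynomial ℝ) : Polynomial ℝ :=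
  p.sum fun n a => Polynomial.C (a * qInt q n) * Polynomial.X ^ (n - 1)

/-- The q-Appell polynomials attached to the sequence (a_k):
`A_{n,q}(x) = Σ_{k=0}^{n} [n choose k]_q a_k x^(n-k)`. -/
noncomputable def qAppell (q : ℝ) (a : ℕ → ℝ) (n : ℕ) : Polynomial ℝ :=
  ∑ k ∈ Finset.range (n + 1), Polynomial.C (qBinom q n k * a k) * Polynomial.X ^ (n - k)

/-! Compare coefficients of `x^j`, `j ≤ n`. Since `A_{n,q}(x) = Σ_j [n choose j]_q a_{n-j} x^j`,
the identity `[n choose k]_q [k choose j]_q = [n choose j]_q [n-j choose k-j]_q` collapses the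
coefficient of the sum to `[n choose j]_q q^j Σ_i [n-j choose i]_q α_{n-j-i} q^i a_i`, which is
`[n choose j]_q q^j [n-j]_q a_{n-j}` by the structure relation at `n - j`. Likewise
`[n]_q [n-1 choose j-1]_q = [j]_q [n choose j]_q` turns the last term into
`[n choose j]_q q^n [j]_q a_{n-j}`, and the two add up to the left side because
`[n]_q = [n-j]_q + q^{n-j} [j]_q`. -/

lemma qInt_add (q : ℝ) (m k : ℕ) : qInt q (m + k) = qInt q m + q ^ m * qInt q k := by
  simp only [qInt, Finset.sum_range_add, Finset.mul_sum, pow_add]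

lemma qInt_succ_pos {q : ℝ} (hq : 0 < q) (n : ℕ) : 0 < qInt q (n + 1) :=
  Finset.sum_pos (fun i _ => pow_pos hq i) Finset.nonempty_range_add_one

lemma qFact_pos {q : ℝ} (hq : 0 < q) (n : ℕ) : 0 < qFact q n := by
  induction n with
  | zero => exact one_pos
  | succ m ih => exact mul_pos ih (qInt_succ_pos hq m)

lemma qBinom_sub {q : ℝ} {n k : ℕ} (h : k ≤ n) : qBinom q n (n - k) = qBinom q n k := by
  rw [qBinom, qBinom, Nat.sub_sub_self h, mul_comm]

lemma qInt_succ_mul_qBinom {q : ℝ} (hq : 0 < q) (n k : ℕ) :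
    qInt q (n + 1) * qBinom q n k = qInt q (k + 1) * qBinom q (n + 1) (k + 1) := by
  have := (qInt_succ_pos hq k).ne'
  rw [qBinom, qBinom, Nat.add_sub_add_right, qFact, qFact]
  field_simp [(qFact_pos hq _).ne']

lemma qBinom_add_mul_qBinom {q : ℝ} (hq : 0 < q) (j m i : ℕ) :
    qBinom q (j + m) (j + i) * qBinom q (j + i) j = qBinom q (j + m) j * qBinom q m i := by
  rw [qBinom, qBinom, qBinom, qBinom, Nat.add_sub_add_left, Nat.add_sub_cancel_left,
    Nat.add_sub_cancel_left]
  field_simp [(qFact_pos hq _).ne']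

lemma qAppell_eq_sum_X_pow (q : ℝ) (a : ℕ → ℝ) (n : ℕ) :
    qAppell q a n = ∑ j ∈ Finset.range (n + 1), C (qBinom q n j * a (n - j)) * X ^ j := by
  rw [qAppell, ← Finset.sum_range_reflect]
  refine Finset.sum_congr rfl fun j hj => ?_
  have hj : j ≤ n := Nat.lt_succ_iff.mp (Finset.mem_range.mp hj)
  rw [Nat.add_sub_cancel, Nat.sub_sub_self hj, qBinom_sub hj]

lemma coeff_qAppell (q : ℝ) (a : ℕ → ℝ) (n j : ℕ) :
    (qAppell q a n).coeff j = if j ≤ n then qBinom q n j * a (n - j) else 0 := by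
  simp only [qAppell_eq_sum_X_pow, finsetSum_coeff, coeff_C_mul_X_pow, Finset.sum_ite_eq,
    Finset.mem_range, Nat.lt_succ_iff]

lemma coeff_C_qInt_mul_X_mul_qAppell_pred {q : ℝ} (hq : 0 < q) (a : ℕ → ℝ) (n j : ℕ) :
    (C (qInt q n) * (X * qAppell q a (n - 1))).coeff j
      = if j ≤ n then qInt q j * qBinom q n j * a (n - j) else 0 := by
  rw [coeff_C_mul]
  cases n with
  | zero => simp +contextual [qInt]
  | succ m =>
    cases j with
    | zero => simp [qInt]
    | succ i =>
      rw [Nat.add_sub_cancel, coeff_X_mul, coeff_qAppell, Nat.add_sub_add_right]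
      split_ifs
      · linear_combination a (m - i) * qInt_succ_mul_qBinom hq m i
      · omega
      · omega
      · rw [mul_zero]

def StructureRelation (q : ℝ) (a α : ℕ → ℝ) : Prop :=
  ∀ n : ℕ, qInt q n * a n
    = ∑ k ∈ Finset.range (n + 1), qBinom q n k * q ^ (n - k) * α k * a (n - k)

lemma StructureRelation.sum_reflect {q : ℝ} {a α : ℕ → ℝ} (hα : StructureRelation q a α)
    (m : ℕ) :
    ∑ i ∈ Finset.range (m + 1), qBinom q m i * α (m - i) * q ^ i * a i = qInt q m * a m := by
  rw [hα m, ← Finset.sum_range_reflect]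
  refine Finset.sum_congr rfl fun i hi => ?_
  have hi : i ≤ m := Nat.lt_succ_iff.mp (Finset.mem_range.mp hi)
  rw [Nat.add_sub_cancel, Nat.sub_sub_self hi, qBinom_sub hi]
  ring

lemma StructureRelation.coeff_sum_qAppell {q : ℝ} (hq : 0 < q) {a α : ℕ → ℝ}
    (hα : StructureRelation q a α) (n j : ℕ) :
    (∑ k ∈ Finset.range (n + 1), C (qBinom q n k * α (n - k) * q ^ k) * qAppell q a k).coeff j
      = if j ≤ n then qBinom q n j * q ^ j * (qInt q (n - j) * a (n - j)) else 0 := by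
  simp only [finsetSum_coeff, coeff_C_mul, coeff_qAppell]
  split_ifs with hj
  · obtain ⟨m, rfl⟩ := Nat.exists_eq_add_of_le hj
    rw [Nat.add_sub_cancel_left, ← hα.sum_reflect, Finset.mul_sum, add_assoc,
      Finset.sum_range_add]
    have below : ∀ k ∈ Finset.range j, qBinom q (j + m) k * α (j + m - k) * q ^ k *
        (if j ≤ k then qBinom q k j * a (k - j) else 0) = 0 := fun k hk => by
      rw [if_neg (by simpa using hk), mul_zero]
    rw [Finset.sum_eq_zero below, zero_add]
    refine Finset.sum_congr rfl fun i _ => ?_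
    rw [if_pos (Nat.le_add_right j i), Nat.add_sub_cancel_left, Nat.add_sub_add_left, pow_add]
    linear_combination α (m - i) * q ^ j * q ^ i * a i * qBinom_add_mul_qBinom hq j m i
  · refine Finset.sum_eq_zero fun k hk => ?_
    have : ¬ j ≤ k := by have := Finset.mem_range.mp hk; omega
    rw [if_neg this, mul_zero]

theorem qAppell_recurrence_general (q : ℝ) (hq0 : 0 < q)
    (a : ℕ → ℝ) (α : ℕ → ℝ)
    (hα : ∀ n : ℕ, qInt q n * a n
      = ∑ k ∈ Finset.range (n + 1), qBinom q n k * q ^ (n - k) * α k * a (n - k))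
    (n : ℕ) :
    Polynomial.C (qInt q n) * (qAppell q a n).comp (Polynomial.C q * Polynomial.X)
      = (∑ k ∈ Finset.range (n + 1),
          Polynomial.C (qBinom q n k * α (n - k) * q ^ k) * qAppell q a k)
        + Polynomial.C (qInt q n * q ^ n) * Polynomial.X * qAppell q a (n - 1) := by
  have hX : C (qInt q n * q ^ n) * X * qAppell q a (n - 1)
      = C (q ^ n) * (C (qInt q n) * (X * qAppell q a (n - 1))) := by
    rw [C_mul]; ring
  ext j
  rw [hX, coeff_add, coeff_C_mul, coeff_C_mul, comp_C_mul_X_coeff, coeff_qAppell,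
    StructureRelation.coeff_sum_qAppell hq0 hα, coeff_C_qInt_mul_X_mul_qAppell_pred hq0]
  split_ifs with hj
  · obtain ⟨m, rfl⟩ := Nat.exists_eq_add_of_le hj
    rw [Nat.add_sub_cancel_left, add_comm j m, qInt_add, pow_add]
    ring
  · simp

/-- Under the structure relation for (α_n), the q-Appell polynomials satisfy the
linear homogeneous recurrence
`[n]_q A_{n,q}(qx) = Σ_{k=0}^n [n choose k]_q α_{n-k} q^k A_{k,q}(x) + x [n]_q q^n A_{n-1,q}(x)`. -/
theorem qAppell_recurrence (q : ℝ) (hq0 : 0 < q) (hq1 : q < 1)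
    (a : ℕ → ℝ) (ha : a 0 ≠ 0) (α : ℕ → ℝ)
    (hα : ∀ n : ℕ, qInt q n * a n
      = ∑ k ∈ Finset.range (n + 1), qBinom q n k * q ^ (n - k) * α k * a (n - k))
    (n : ℕ) (hn : 1 ≤ n) :
    Polynomial.C (qInt q n) * (qAppell q a n).comp (Polynomial.C q * Polynomial.X)
      = (∑ k ∈ Finset.range (n + 1),
          Polynomial.C (qBinom q n k * α (n - k) * q ^ k) * qAppell q a k)
        + Polynomial.C (qInt q n * q ^ n) * Polynomial.X * qAppell q a (n - 1) :=
  qAppell_recurrence_general q hq0 a α hα n
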